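/- Let A ∈ ℝ and let z₁,…,z₅ : ℝ → ℝ be differentiable functions satisfying the system (8): z₁' = 2z₄, z₂' = z₃, z₃' = −z₁ − 16A z₂ − 16 z₂², z₄' = −A z₁ + (1/3) z₅ − (8/3) z₁ z₂, z₅' = −6A z₄ + 2 z₁ z₃ − 8 z₂ z₄. Then F₃ = z₁ z₅ − 3 z₄² − 2 z₁² z₂ is a constant of motion: d/dt F₃(z(t)) = 0. -/

import Mathlib

/-! F₃ is a polynomial in z₁, z₂, z₄, z₅, so along any differentiable curve its derivative is
`∇F₃ · z'` by the chain rule. Substituting the right-hand sides of (8) for `z'` turns this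
into a polynomial identity in z₁, …, z₅ and A in which every monomial cancels. -/

def F3 (z₁ z₂ z₄ z₅ : ℝ) : ℝ := z₁ * z₅ - 3 * z₄ ^ 2 - 2 * z₁ ^ 2 * z₂

theorem hasDerivAt_F3 {z₁ z₂ z₄ z₅ : ℝ → ℝ} {v₁ v₂ v₄ v₅ t : ℝ}
    (d₁ : HasDerivAt z₁ v₁ t) (d₂ : HasDerivAt z₂ v₂ t)
    (d₄ : HasDerivAt z₄ v₄ t) (d₅ : HasDerivAt z₅ v₅ t) :
    HasDerivAt (fun s => F3 (z₁ s) (z₂ s) (z₄ s) (z₅ s))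
      ((z₅ t - 4 * z₁ t * z₂ t) * v₁ - 2 * z₁ t ^ 2 * v₂ - 6 * z₄ t * v₄ + z₁ t * v₅) t := by
  have := ((d₁.mul d₅).sub ((d₄.pow 2).const_mul 3)).sub (((d₁.pow 2).const_mul 2).mul d₂)
  refine this.congr_deriv ?_
  simp only [Pi.pow_apply]
  ring

theorem F3_gradient_dot_field (A z₁ z₂ z₃ z₄ z₅ : ℝ) :
    (z₅ - 4 * z₁ * z₂) * (2 * z₄) - 2 * z₁ ^ 2 * z₃
      - 6 * z₄ * (-A * z₁ + (1/3) * z₅ - (8/3) * z₁ * z₂)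
      + z₁ * (-(6 * A) * z₄ + 2 * z₁ * z₃ - 8 * z₂ * z₄) = 0 := by
  ring

theorem F3_constant_of_motion (A : ℝ) (z₁ z₂ z₃ z₄ z₅ : ℝ → ℝ)
    (hz₁ : Differentiable ℝ z₁) (hz₂ : Differentiable ℝ z₂)
    (hz₄ : Differentiable ℝ z₄)
    (hz₅ : Differentiable ℝ z₅)
    (h₁ : ∀ t, deriv z₁ t = 2 * z₄ t)
    (h₂ : ∀ t, deriv z₂ t = z₃ t)
    (h₄ : ∀ t, deriv z₄ t = -A * z₁ t + (1/3) * z₅ t - (8/3) * z₁ t * z₂ t)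
    (h₅ : ∀ t, deriv z₅ t = -(6 * A) * z₄ t + 2 * z₁ t * z₃ t - 8 * z₂ t * z₄ t) :
    ∀ t, deriv (fun s =>
      z₁ s * z₅ s - 3 * (z₄ s)^2 - 2 * (z₁ s)^2 * z₂ s) t = 0 := by
  intro t
  have dF := hasDerivAt_F3 (h₁ t ▸ (hz₁ t).hasDerivAt) (h₂ t ▸ (hz₂ t).hasDerivAt)
    (h₄ t ▸ (hz₄ t).hasDerivAt) (h₅ t ▸ (hz₅ t).hasDerivAt)
  exact dF.deriv.trans (F3_gradient_dot_field A (z₁ t) (z₂ t) (z₃ t) (z₄ t) (z₅ t))
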